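/- arXiv:1312.4714 — 3 statements merged into one kernel-verified Lean document; each statement's English description precedes it below -/
import Mathlib

section
/- Let 0 < α < 1, a ∈ ℝ, and let β be a real number with β > −1 and β ≠ α − 1. Then for every x > a, the left Riemann–Liouville fractional derivative of the power function u ↦ (u−a)^β satisfies _aD^α_x (x−a)^β = (Γ(β+1)/Γ(β+1−α)) (x−a)^{β−α}. -/
/-!
The substitution `u = a + (x - a) t` turns `∫_a^x (u - a)^β (x - u)^(-α) du` into a Beta integral,
so the fractional integral of `(u - a)^β` is `Γ(β+1)/Γ(β+2-α) · (x - a)^(β+1-α)`. Differentiating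
brings down the factor `s = β + 1 - α`, which the recurrence `1/Γ(s) = s/Γ(s+1)` absorbs; with
Mathlib's convention `Γ(0) = 0` that recurrence also holds at `s = 0`.
-/

open MeasureTheory intervalIntegral

/-- The fractional integral `(1/Γ(1-α)) ∫_a^x f(u)(x-u)^(-α) du` whose derivative is the
left Riemann–Liouville fractional derivative of order `α ∈ (0,1)` with base point `a`. -/
noncomputable def leftRLint (a α : ℝ) (f : ℝ → ℝ) (x : ℝ) : ℝ :=
  (1 / Real.Gamma (1 - α)) * ∫ u in a..x, f u * (x - u) ^ (-α)

/-- The left Riemann–Liouville fractional derivative of order `α ∈ (0,1)`: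
`_aD^α_x f(x) = (d/dx)[(1/Γ(1-α)) ∫_a^x f(u)(x-u)^(-α) du]`. -/
noncomputable def leftRLderiv (a α : ℝ) (f : ℝ → ℝ) (x : ℝ) : ℝ :=
  deriv (leftRLint a α f) x

namespace Real

theorem inv_Gamma_eq_self_mul_inv_Gamma_add_one (s : ℝ) :
    (Gamma s)⁻¹ = s * (Gamma (s + 1))⁻¹ := by
  have h := Complex.one_div_Gamma_eq_self_mul_one_div_Gamma_add_one s
  rw [← Complex.ofReal_one, ← Complex.ofReal_add, Complex.Gamma_ofReal, Complex.Gamma_ofReal] at h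
  exact_mod_cast h

theorem integral_rpow_mul_sub_rpow {c p q : ℝ} (hc : 0 < c) (hp : 0 < p) (hq : 0 < q) :
    ∫ v in (0 : ℝ)..c, v ^ (p - 1) * (c - v) ^ (q - 1)
      = c ^ (p + q - 1) * (Gamma p * Gamma q / Gamma (p + q)) := by
  have hbeta := Complex.betaIntegral_scaled p q hc
  rw [Complex.betaIntegral_eq_Gamma_mul_div _ _ (by simpa) (by simpa)] at hbeta
  apply Complex.ofReal_injective
  rw [← intervalIntegral.integral_ofReal]
  push_cast [← Complex.Gamma_ofReal, Complex.ofReal_cpow hc.le]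
  rw [← hbeta]
  refine intervalIntegral.integral_congr fun v hv => ?_
  rw [Set.uIcc_of_le hc.le] at hv
  simp only [Complex.ofReal_cpow hv.1, Complex.ofReal_cpow (sub_nonneg.2 hv.2)]
  push_cast
  rfl

end Real

open Real Filter Topology

theorem leftRLint_sub_rpow {a α β x : ℝ} (hα : α < 1) (hβ : -1 < β) (hx : a < x) :
    leftRLint a α (fun u => (u - a) ^ β) x
      = Gamma (β + 1) / Gamma (β + 2 - α) * (x - a) ^ (β + 1 - α) := by
  have hbeta := integral_rpow_mul_sub_rpow (sub_pos.2 hx) (p := β + 1) (q := 1 - α)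
    (by linarith) (by linarith)
  rw [add_sub_cancel_right, sub_sub_cancel_left, show β + 1 + (1 - α) - 1 = β + 1 - α by ring,
    show β + 1 + (1 - α) = β + 2 - α by ring] at hbeta
  have hshift : ∫ u in a..x, (u - a) ^ β * (x - u) ^ (-α)
      = ∫ v in (0 : ℝ)..x - a, v ^ β * (x - a - v) ^ (-α) := by
    simpa [sub_sub_sub_cancel_right] using intervalIntegral.integral_comp_sub_right (a := a)
      (b := x) (fun v => v ^ β * (x - a - v) ^ (-α)) a
  have hG : Gamma (1 - α) ≠ 0 := (Gamma_pos_of_pos (by linarith)).ne'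
  rw [leftRLint, hshift, hbeta]
  field_simp

theorem leftRLderiv_pow_general (a α β : ℝ) (hα1 : α < 1)
    (hβ : -1 < β) (x : ℝ) (hx : a < x) :
    leftRLderiv a α (fun u => (u - a) ^ β) x
      = (Real.Gamma (β + 1) / Real.Gamma (β + 1 - α)) * (x - a) ^ (β - α) := by
  set s := β + 1 - α with hs
  have hint : leftRLint a α (fun u => (u - a) ^ β)
      =ᶠ[𝓝 x] fun y => Gamma (β + 1) / Gamma (s + 1) * (y - a) ^ s := by
    filter_upwards [Ioi_mem_nhds hx] with y hy
    rw [leftRLint_sub_rpow hα1 hβ hy, hs, show β + 1 - α + 1 = β + 2 - α by ring]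
  have hderiv : HasDerivAt (fun y => (y - a) ^ s) (s * (x - a) ^ (s - 1)) x := by
    simpa using ((hasDerivAt_id x).sub_const a).rpow_const (p := s) (Or.inl (sub_pos.2 hx).ne')
  rw [leftRLderiv, hint.deriv_eq, (hderiv.const_mul _).deriv, div_eq_mul_inv, div_eq_mul_inv,
    inv_Gamma_eq_self_mul_inv_Gamma_add_one s, show s - 1 = β - α by ring]
  ring

/-- Left Riemann–Liouville fractional derivative of a power function: for `β > -1`,
`β ≠ α - 1` and `x > a`,
`_aD^α_x (x-a)^β = (Γ(β+1)/Γ(β+1-α)) (x-a)^(β-α)`. -/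
theorem leftRLderiv_pow (a α β : ℝ) (hα0 : 0 < α) (hα1 : α < 1)
    (hβ : -1 < β) (hβα : β ≠ α - 1) (x : ℝ) (hx : a < x) :
    leftRLderiv a α (fun u => (u - a) ^ β) x
      = (Real.Gamma (β + 1) / Real.Gamma (β + 1 - α)) * (x - a) ^ (β - α) :=
  leftRLderiv_pow_general a α β hα1 hβ x hx
end

section
/- Let 0 < α < 1, c ∈ ℝ, d > 0, and let f(x) = (1/d)(x−c) − ((5−α)/(2d²))(x−c)² + ((3−α)/(2d³))(x−c)³. Then f(c) = 0, f(c+d) = 0, the left Riemann–Liouville fractional derivative _cD^α_x f(x) tends to 0 as x → c from the right, and _cD^α_x f evaluated at x = c+d equals 0. -/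
open MeasureTheory intervalIntegral

/-!
Write `f(x) = p(x - c)` for a polynomial `p`. After substituting `v = x - u` and expanding
`(t - v)ⁿ` binomially, `∫_c^x (u - c)ⁿ (x - u)^(-α) du = βₙ (x - c)^(n+1-α)` with the Beta value
`βₙ = B(n + 1, 1 - α) = n! / ((1 - α) ⋯ (n + 1 - α))`. So for `x > c` the fractional integral of `f`
is a combination of the powers `(x - c)^(n+1-α)` and its derivative one of the `(x - c)^(n-α)`,
which vanish at `c⁺` for `n ≥ 1`. At `x = c + d` the three terms of the cubic contribute
`d^(-α) / ((1 - α)(2 - α))` times `2 - α`, `-(5 - α)` and `3`, which cancel.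
-/

open Finset Polynomial

section
variable {α c t : ℝ}

lemma pow_mul_rpow_neg_eq_rpow {v : ℝ} (hv : 0 ≤ v) (hα : α < 1) (k : ℕ) :
    v ^ k * v ^ (-α) = v ^ ((k : ℝ) - α) := by
  rcases k with _ | k
  · simp
  · rw [mul_comm, sub_eq_neg_add, Real.rpow_add_natCast' hv]
    push_cast; linarith

lemma integral_pow_mul_rpow_neg (hα : α < 1) (k : ℕ) (ht : 0 ≤ t) :
    ∫ v in 0..t, v ^ k * v ^ (-α) = t ^ ((k : ℝ) + 1 - α) / (k + 1 - α) := by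
  rw [integral_congr fun v hv => pow_mul_rpow_neg_eq_rpow (Set.uIcc_of_le ht ▸ hv).1 hα k,
    integral_rpow (Or.inl (by linarith [k.cast_nonneg (α := ℝ)])),
    Real.zero_rpow (by linarith [k.cast_nonneg (α := ℝ)])]
  ring_nf

-- `B(n + 1, 1 - α) = ∫₀¹ (1 - s)ⁿ s^(-α) ds`, with `(1 - s)ⁿ` expanded binomially.
noncomputable def rlMonomialCoeff (α : ℝ) (n : ℕ) : ℝ :=
  ∑ k ∈ range (n + 1), (-1) ^ k * n.choose k / (k + 1 - α)

lemma integral_sub_pow_mul_rpow_neg (hα : α < 1) (n : ℕ) (ht : 0 ≤ t) :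
    ∫ v in 0..t, (t - v) ^ n * v ^ (-α) = rlMonomialCoeff α n * t ^ ((n : ℝ) + 1 - α) := by
  have hterm : ∀ k ∈ range (n + 1), ∫ v in 0..t, (-v) ^ k * t ^ (n - k) * n.choose k * v ^ (-α)
      = (-1) ^ k * n.choose k / (k + 1 - α) * t ^ ((n : ℝ) + 1 - α) := by
    intro k hk
    have hkn : k ≤ n := Nat.lt_succ_iff.mp (mem_range.mp hk)
    have hpow : t ^ ((n : ℝ) + 1 - α) = t ^ ((k : ℝ) + 1 - α) * t ^ (n - k) := by
      rw [← Real.rpow_add_natCast' ht (by push_cast [hkn]; linarith [k.cast_nonneg (α := ℝ)])]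
      push_cast [hkn]; ring_nf
    simp_rw [show ∀ v : ℝ, (-v) ^ k * t ^ (n - k) * n.choose k * v ^ (-α)
      = (-1) ^ k * t ^ (n - k) * n.choose k * (v ^ k * v ^ (-α)) from fun v => by
        rw [neg_pow]; ring]
    rw [intervalIntegral.integral_const_mul, integral_pow_mul_rpow_neg hα k ht, hpow]
    ring
  have hint : ∀ k ∈ range (n + 1), IntervalIntegrable
      (fun v => (-v) ^ k * t ^ (n - k) * n.choose k * v ^ (-α)) volume 0 t := fun k _ =>
    (intervalIntegral.intervalIntegrable_rpow' (by linarith)).continuousOn_mul (by fun_prop)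
  simp_rw [show ∀ v, t - v = -v + t from fun v => by ring, add_pow, sum_mul]
  rw [intervalIntegral.integral_finsetSum hint, sum_congr rfl hterm, rlMonomialCoeff, sum_mul]

lemma leftRLint_eval_sub (hα : α < 1) (p : ℝ[X]) {N : ℕ} (hN : p.natDegree < N) {x : ℝ}
    (hcx : c ≤ x) :
    leftRLint c α (fun u => p.eval (u - c)) x =
      1 / Real.Gamma (1 - α) *
        ∑ n ∈ range N, p.coeff n * rlMonomialCoeff α n * (x - c) ^ ((n : ℝ) + 1 - α) := by
  have hsub : ∫ u in c..x, p.eval (u - c) * (x - u) ^ (-α)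
      = ∫ v in 0..x - c, p.eval (x - c - v) * v ^ (-α) := by
    simpa using intervalIntegral.integral_comp_sub_left
      (fun v => p.eval (x - c - v) * v ^ (-α)) x (a := c) (b := x)
  have hint : ∀ n ∈ range N, IntervalIntegrable
      (fun v => p.coeff n * ((x - c - v) ^ n * v ^ (-α))) volume 0 (x - c) := fun n _ =>
    ((intervalIntegral.intervalIntegrable_rpow' (by linarith)).continuousOn_mul
      (by fun_prop)).const_mul _
  simp_rw [leftRLint, hsub, eval_eq_sum_range' hN, sum_mul, mul_assoc]
  rw [intervalIntegral.integral_finsetSum hint]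
  simp_rw [intervalIntegral.integral_const_mul,
    integral_sub_pow_mul_rpow_neg hα _ (sub_nonneg.mpr hcx)]

lemma hasDerivAt_leftRLint_eval_sub (hα : α < 1) (p : ℝ[X]) {N : ℕ} (hN : p.natDegree < N)
    {x : ℝ} (hx : c < x) :
    HasDerivAt (leftRLint c α (fun u => p.eval (u - c)))
      (1 / Real.Gamma (1 - α) * ∑ n ∈ range N,
        p.coeff n * rlMonomialCoeff α n * (((n : ℝ) + 1 - α) * (x - c) ^ ((n : ℝ) - α))) x := by
  have hclosed : leftRLint c α (fun u => p.eval (u - c)) =ᶠ[nhds x] fun y =>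
      1 / Real.Gamma (1 - α) *
        ∑ n ∈ range N, p.coeff n * rlMonomialCoeff α n * (y - c) ^ ((n : ℝ) + 1 - α) :=
    Filter.eventually_of_mem (Ici_mem_nhds hx) fun y hy => leftRLint_eval_sub hα p hN hy
  refine HasDerivAt.congr_of_eventuallyEq ?_ hclosed
  refine (HasDerivAt.fun_sum fun n _ => HasDerivAt.const_mul _ ?_).const_mul _
  refine (((hasDerivAt_id' x).sub_const c).rpow_const (p := (n : ℝ) + 1 - α)
    (Or.inl (sub_ne_zero.mpr hx.ne'))).congr_deriv ?_
  rw [add_sub_right_comm, add_sub_cancel_right, one_mul]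

lemma leftRLderiv_eval_sub (hα : α < 1) (p : ℝ[X]) {N : ℕ} (hN : p.natDegree < N)
    {x : ℝ} (hx : c < x) :
    leftRLderiv c α (fun u => p.eval (u - c)) x =
      1 / Real.Gamma (1 - α) * ∑ n ∈ range N,
        p.coeff n * rlMonomialCoeff α n * (((n : ℝ) + 1 - α) * (x - c) ^ ((n : ℝ) - α)) :=
  (hasDerivAt_leftRLint_eval_sub hα p hN hx).deriv

lemma tendsto_leftRLderiv_eval_sub (hα : α < 1) (p : ℝ[X]) (hp : p.eval 0 = 0) :
    Filter.Tendsto (leftRLderiv c α (fun u => p.eval (u - c))) (nhdsWithin c (Set.Ioi c))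
      (nhds 0) := by
  have hN := p.natDegree.lt_succ_self
  have hterm : ∀ n ∈ range (p.natDegree + 1), Filter.Tendsto
      (fun x => p.coeff n * rlMonomialCoeff α n * (((n : ℝ) + 1 - α) * (x - c) ^ ((n : ℝ) - α)))
      (nhdsWithin c (Set.Ioi c)) (nhds 0) := by
    intro n _
    rcases n with _ | n
    · simp [coeff_zero_eq_eval_zero, hp]
    · have hpos : 0 < (n : ℝ) + 1 - α := by linarith [n.cast_nonneg (α := ℝ)]
      have hcont : ContinuousAt (fun x => (x - c) ^ ((n : ℝ) + 1 - α)) c :=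
        (continuousAt_id.sub continuousAt_const).rpow_const (Or.inr hpos.le)
      simpa [Real.zero_rpow hpos.ne'] using
        ((hcont.tendsto.mono_left nhdsWithin_le_nhds).const_mul _).const_mul
          (p.coeff (n + 1) * rlMonomialCoeff α (n + 1))
  have hsum := (tendsto_finsetSum _ hterm).const_mul (1 / Real.Gamma (1 - α))
  rw [sum_const_zero, mul_zero] at hsum
  exact hsum.congr' (Filter.eventually_of_mem self_mem_nhdsWithin fun x hx =>
    (leftRLderiv_eval_sub hα p hN hx).symm)

end

theorem cubic_boundary_values_general (α c d : ℝ) (hα1 : α < 1) (hd : 0 < d)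
    (f : ℝ → ℝ)
    (hf : f = fun x => (1 / d) * (x - c) - ((5 - α) / (2 * d ^ 2)) * (x - c) ^ 2
        + ((3 - α) / (2 * d ^ 3)) * (x - c) ^ 3) :
    f c = 0 ∧ f (c + d) = 0 ∧
      Filter.Tendsto (leftRLderiv c α f) (nhdsWithin c (Set.Ioi c)) (nhds 0) ∧
      leftRLderiv c α f (c + d) = 0 := by
  set p : ℝ[X] := C (1 / d) * X - C ((5 - α) / (2 * d ^ 2)) * X ^ 2
    + C ((3 - α) / (2 * d ^ 3)) * X ^ 3
  have hfp : f = fun x => p.eval (x - c) := by simp [hf, p]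
  have hdeg : p.natDegree < 4 := Nat.lt_succ_of_le (by simp only [p]; compute_degree!)
  refine ⟨by simp [hf], by simp only [hf, add_sub_cancel_left]; field_simp; ring, ?_, ?_⟩
  · rw [hfp]
    exact tendsto_leftRLderiv_eval_sub hα1 p (by simp [p])
  obtain ⟨hc0, hc1, hc2, hc3⟩ : p.coeff 0 = 0 ∧ p.coeff 1 = 1 / d ∧
      p.coeff 2 = -((5 - α) / (2 * d ^ 2)) ∧ p.coeff 3 = (3 - α) / (2 * d ^ 3) := by
    simp [p, coeff_X, coeff_X_pow]
  have h1 : 1 - α ≠ 0 := by linarith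
  have h2 : 2 - α ≠ 0 := by linarith
  have h3 : 3 - α ≠ 0 := by linarith
  have h4 : 4 - α ≠ 0 := by linarith
  rw [hfp, leftRLderiv_eval_sub hα1 p hdeg (by linarith), add_sub_cancel_left]
  refine mul_eq_zero_of_right _ ?_
  simp only [← pow_mul_rpow_neg_eq_rpow hd.le hα1]
  norm_num [sum_range_succ, rlMonomialCoeff, hc0, hc1, hc2, hc3]
  field_simp
  ring

/-- For `f(x) = (1/d)(x-c) - ((5-α)/(2d²))(x-c)² + ((3-α)/(2d³))(x-c)³` one has
`f(c) = 0`, `f(c+d) = 0`, `_cD^α_x f(x) → 0` as `x → c⁺`, and `_cD^α_{c+d} f = 0`. -/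
theorem cubic_boundary_values (α c d : ℝ) (hα0 : 0 < α) (hα1 : α < 1) (hd : 0 < d)
    (f : ℝ → ℝ)
    (hf : f = fun x => (1 / d) * (x - c) - ((5 - α) / (2 * d ^ 2)) * (x - c) ^ 2
        + ((3 - α) / (2 * d ^ 3)) * (x - c) ^ 3) :
    f c = 0 ∧ f (c + d) = 0 ∧
      Filter.Tendsto (leftRLderiv c α f) (nhdsWithin c (Set.Ioi c)) (nhds 0) ∧
      leftRLderiv c α f (c + d) = 0 :=
  cubic_boundary_values_general α c d hα1 hd f hf
end

section
/- Let a < b, let 0 < α < 1, and let P, Q, R : [a,b] → ℝ be continuous. Suppose that for every continuous function η : [a,b] → ℝ with η(a) = η(b) = 0 whose left Riemann–Liouville fractional derivative _aD^α_x η exists and is bounded on (a,b], one has ∫_a^b [ P(x) (_aD^α_x η(x))² + Q(x) η(x) _aD^α_x η(x) + R(x) (η(x))² ] dx ≥ 0. Then P(x) ≥ 0 for all x ∈ [a,b]. -/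
/-
If `P c < 0` for some `c ∈ [a, b)`, then `P ≤ -m < 0` on some `[c, c + δ]`. Test the functional
on the hat function `η` of height `h` on `[c, c + 2h]`, the second difference of `t ↦ t₊` with
step `h` at `x - c`. Since `D^α (x - c)₊ = (x - c)₊^(1-α) / Γ(2-α)`, `D^α η` is the second
difference of `t ↦ t₊^(1-α) / Γ(2-α)`: it is `(x - c)^(1-α) / Γ(2-α)` on `[c, c + h]`,
`O(h^(1-α))` everywhere, and `O(h²)` beyond `c + δ`. Hence the `P`-term over `[a, c + h]` is
at most `-m h^(3-2α) / ((3-2α) Γ(2-α)²)`, while the `Q`-term, the `R`-term and the rest of the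
`P`-term are `O(h^(3-α))`, `O(h³)` and `O(h⁴)`, so the functional is negative for small `h`.
Continuity extends `P ≥ 0` from `[a, b)` to `[a, b]`.
-/

open MeasureTheory intervalIntegral

open Set Real Filter Topology

lemma max_zero_rpow_of_nonpos {p t : ℝ} (hp : p ≠ 0) (ht : t ≤ 0) : max t 0 ^ p = 0 := by
  rw [max_eq_right ht, zero_rpow hp]

lemma hasDerivAt_max_zero_rpow {q : ℝ} (hq : 1 < q) (t : ℝ) :
    HasDerivAt (fun t => max t 0 ^ q) (q * max t 0 ^ (q - 1)) t := by
  rcases lt_or_ge 0 t with ht | ht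
  · have heq : (fun t => t ^ q) =ᶠ[nhds t] fun t => max t 0 ^ q := by
      filter_upwards [Ioi_mem_nhds ht] with s hs
      rw [max_eq_left (le_of_lt hs)]
    rw [max_eq_left ht.le]
    exact (hasDerivAt_rpow_const (Or.inl ht.ne')).congr_of_eventuallyEq heq.symm
  rw [max_eq_right ht, zero_rpow (by linarith), mul_zero]
  have hleft : HasDerivWithinAt (fun t => max t 0 ^ q) 0 (Iic 0) t :=
    (hasDerivWithinAt_const t _ ((0 : ℝ) ^ q)).congr
      (fun s hs => by rw [max_eq_right hs]) (by rw [max_eq_right ht])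
  rcases ht.lt_or_eq with ht | rfl
  · exact hleft.hasDerivAt (Iic_mem_nhds ht)
  have hright : HasDerivWithinAt (fun t : ℝ => max t 0 ^ q) 0 (Ici 0) 0 := by
    have h := (hasDerivAt_rpow_const (x := (0 : ℝ)) (Or.inr hq.le)).hasDerivWithinAt
      (s := Ici 0)
    rw [zero_rpow (by linarith), mul_zero] at h
    exact h.congr (fun s hs => by rw [max_eq_left hs]) (by rw [max_self])
  simpa [Iic_union_Ici] using hleft.union hright

lemma integral_sub_rpow {r : ℝ} (hr : -1 < r) (d x : ℝ) :
    ∫ u in d..x, (x - u) ^ r = (x - d) ^ (r + 1) / (r + 1) := by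
  rw [integral_comp_sub_left (fun v => v ^ r), sub_self, integral_rpow (Or.inl hr),
    zero_rpow (by linarith), sub_zero]

lemma intervalIntegrable_sub_rpow {r : ℝ} (hr : -1 < r) (x d e : ℝ) :
    IntervalIntegrable (fun u => (x - u) ^ r) volume d e := by
  simpa using (intervalIntegrable_rpow' (a := x - d) (b := x - e) hr).comp_sub_left x

lemma integral_sub_mul_sub_rpow {α d x : ℝ} (hα1 : α < 1) (hdx : d ≤ x) :
    ∫ u in d..x, (u - d) * (x - u) ^ (-α) = (x - d) ^ (2 - α) / ((1 - α) * (2 - α)) := by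
  have hsplit : EqOn (fun u => (u - d) * (x - u) ^ (-α))
      (fun u => (x - d) * (x - u) ^ (-α) - (x - u) ^ (-α + 1)) (uIcc d x) := by
    intro u hu
    rw [uIcc_of_le hdx] at hu
    simp only
    rw [rpow_add' (by linarith [hu.2]) (by linarith), rpow_one]
    ring
  rw [integral_congr hsplit,
    integral_sub ((intervalIntegrable_sub_rpow (by linarith) _ _ _).const_mul _)
      (intervalIntegrable_sub_rpow (by linarith) _ _ _), intervalIntegral.integral_const_mul,
    integral_sub_rpow (by linarith), integral_sub_rpow (by linarith), ← mul_div_assoc,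
    ← rpow_one_add' (by linarith) (by linarith), show -α + 1 + 1 = 2 - α by ring,
    show 1 + (-α + 1) = 2 - α by ring, neg_add_eq_sub]
  have h1 : 1 - α ≠ 0 := by linarith
  have h2 : 2 - α ≠ 0 := by linarith
  field_simp
  ring

lemma integral_max_sub_mul_sub_rpow {α a d : ℝ} (hα1 : α < 1) (had : a ≤ d) (x : ℝ) :
    ∫ u in a..x, max (u - d) 0 * (x - u) ^ (-α)
      = max (x - d) 0 ^ (2 - α) / ((1 - α) * (2 - α)) := by
  have hvanish : ∀ u ≤ d, max (u - d) 0 * (x - u) ^ (-α) = 0 := fun u hu => by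
    rw [max_eq_right (by linarith), zero_mul]
  rcases le_or_gt x d with hxd | hdx
  · rw [integral_congr (g := 0) fun u hu => hvanish u (hu.2.trans (max_le had hxd)),
      max_eq_right (by linarith), zero_rpow (by linarith)]
    simp
  have hint : ∀ e f : ℝ,
      IntervalIntegrable (fun u => max (u - d) 0 * (x - u) ^ (-α)) volume e f := fun e f =>
    (intervalIntegrable_sub_rpow (by linarith) x e f).continuousOn_mul (by fun_prop)
  have hleft : ∫ u in a..d, max (u - d) 0 * (x - u) ^ (-α) = 0 := by
    rw [integral_congr (g := 0) fun u hu => hvanish u (hu.2.trans (max_le had le_rfl))]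
    simp
  have hright : ∫ u in d..x, max (u - d) 0 * (x - u) ^ (-α)
      = ∫ u in d..x, (u - d) * (x - u) ^ (-α) := by
    refine integral_congr fun u hu => ?_
    rw [uIcc_of_le hdx.le] at hu
    simp only [max_eq_left (sub_nonneg.2 hu.1)]
  rw [← integral_add_adjacent_intervals (hint a d) (hint d x), hleft, hright, zero_add,
    integral_sub_mul_sub_rpow hα1 hdx.le, max_eq_left (by linarith)]

lemma Gamma_two_sub {α : ℝ} (hα1 : α < 1) : Gamma (2 - α) = (1 - α) * Gamma (1 - α) := by
  rw [show (2 : ℝ) - α = 1 - α + 1 by ring]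
  exact Gamma_add_one (by linarith)

lemma Gamma_three_sub {α : ℝ} (hα1 : α < 1) : Gamma (3 - α) = (2 - α) * Gamma (2 - α) := by
  rw [show (3 : ℝ) - α = 2 - α + 1 by ring]
  exact Gamma_add_one (by linarith)

def sndDiff (f : ℝ → ℝ) (h x : ℝ) : ℝ := f x - 2 * f (x - h) + f (x - 2 * h)

lemma hasDerivAt_sndDiff_sub {f f' : ℝ → ℝ} (hf : ∀ t, HasDerivAt f (f' t) t)
    (h c x : ℝ) :
    HasDerivAt (fun x => sndDiff f h (x - c)) (sndDiff f' h (x - c)) x := by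
  have hshift : ∀ e, HasDerivAt (fun x => f (x - e)) (f' (x - e)) x := fun e =>
    (hf (x - e)).comp_sub_const x e
  simpa only [sndDiff, sub_sub] using
    ((hshift c).fun_sub ((hshift (c + h)).const_mul 2)).fun_add (hshift (c + 2 * h))

lemma sndDiff_eq_self {f : ℝ → ℝ} (hf : ∀ t ≤ 0, f t = 0) {h x : ℝ} (hh : 0 ≤ h)
    (hx : x ≤ h) : sndDiff f h x = f x := by
  rw [sndDiff, hf (x - h) (by linarith), hf (x - 2 * h) (by linarith)]
  ring

lemma abs_sndDiff_le_of_monotone {f : ℝ → ℝ} (hf : Monotone f) {h ω : ℝ} (hh : 0 ≤ h)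
    (hω : ∀ t, f t - f (t - h) ≤ ω) (x : ℝ) : |sndDiff f h x| ≤ ω := by
  have h₁ := hω x
  have h₂ := hω (x - h)
  have h₃ : f (x - h) ≤ f x := hf (by linarith)
  have h₄ : f (x - h - h) ≤ f (x - h) := hf (by linarith)
  rw [sub_sub, ← two_mul] at h₂ h₄
  rw [sndDiff, abs_le]
  constructor <;> linarith

lemma abs_sndDiff_le_of_hasDerivAt {f f' f'' : ℝ → ℝ} {h x K : ℝ} (hh : 0 ≤ h)
    (hf : ∀ t ∈ Icc (x - 2 * h) x, HasDerivAt f (f' t) t)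
    (hf' : ∀ t ∈ Icc (x - 2 * h) x, HasDerivAt f' (f'' t) t)
    (hK : ∀ t ∈ Icc (x - 2 * h) x, |f'' t| ≤ K) :
    |sndDiff f h x| ≤ K * h ^ 2 := by
  set s := x - 2 * h with hs
  have hslope : ∀ u ∈ Icc s (s + h), |f' (u + h) - f' u| ≤ K * h := by
    intro u hu
    have hmem : ∀ t ∈ Icc u (u + h), t ∈ Icc s x := fun t ht =>
      ⟨by linarith [hu.1, ht.1], by linarith [hu.2, ht.2]⟩
    simpa using norm_image_sub_le_of_norm_deriv_le_segment'
      (fun t ht => (hf' t (hmem t ht)).hasDerivWithinAt)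
      (fun t ht => hK t (hmem t (Ico_subset_Icc_self ht))) (u + h) ⟨by linarith, le_rfl⟩
  have hmem : ∀ u ∈ Icc s (s + h), u ∈ Icc s x ∧ u + h ∈ Icc s x := fun u hu =>
    ⟨⟨hu.1, by linarith [hu.2]⟩, ⟨by linarith [hu.1], by linarith [hu.2]⟩⟩
  have hφ := norm_image_sub_le_of_norm_deriv_le_segment'
    (f := fun u => f (u + h) - f u) (f' := fun u => f' (u + h) - f' u)
    (fun u hu => (((hf _ (hmem u hu).2).comp_add_const u h).sub
      (hf u (hmem u hu).1)).hasDerivWithinAt)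
    (fun u hu => hslope u (Ico_subset_Icc_self hu)) (s + h) ⟨by linarith, le_rfl⟩
  have hsnd : sndDiff f h x = f (s + h + h) - f (s + h) - (f (s + h) - f s) := by
    rw [sndDiff, show s + h + h = x by rw [hs]; ring, show s + h = x - h by rw [hs]; ring]
    ring
  rw [hsnd]
  simpa [Real.norm_eq_abs, sq, mul_assoc] using hφ

lemma abs_sndDiff_max_zero_rpow_le_of_le {α δ h x : ℝ} (hα0 : 0 < α) (hα1 : α < 1)
    (hδ : 0 < δ) (hh : 0 ≤ h) (hx : 2 * h + δ ≤ x) :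
    |sndDiff (fun t => max t 0 ^ (1 - α)) h x| ≤ α * (1 - α) * δ ^ (-α - 1) * h ^ 2 := by
  have hpos : ∀ t ∈ Icc (x - 2 * h) x, δ ≤ t := fun t ht => by linarith [ht.1]
  have hsnd :
      sndDiff (fun t => max t 0 ^ (1 - α)) h x = sndDiff (fun t => t ^ (1 - α)) h x := by
    simp only [sndDiff]
    rw [max_eq_left (by linarith), max_eq_left (by linarith), max_eq_left (by linarith)]
  rw [hsnd]
  refine abs_sndDiff_le_of_hasDerivAt hh (f' := fun t => (1 - α) * t ^ (-α))
    (f'' := fun t => (1 - α) * (-α * t ^ (-α - 1))) (fun t ht => ?_) (fun t ht => ?_)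
    (fun t ht => ?_)
  · simpa [show 1 - α - 1 = -α by ring] using
      hasDerivAt_rpow_const (p := 1 - α) (Or.inl (hδ.trans_le (hpos t ht)).ne')
  · exact (hasDerivAt_rpow_const (Or.inl (hδ.trans_le (hpos t ht)).ne')).const_mul _
  · have hmono : t ^ (-α - 1) ≤ δ ^ (-α - 1) :=
      rpow_le_rpow_of_nonpos hδ (hpos t ht) (by linarith)
    have hnn : 0 ≤ t ^ (-α - 1) := rpow_nonneg (hδ.le.trans (hpos t ht)) _
    have hc : 0 ≤ α * (1 - α) := mul_nonneg hα0.le (by linarith)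
    rw [show (1 - α) * (-α * t ^ (-α - 1)) = -(α * (1 - α) * t ^ (-α - 1)) by ring, abs_neg,
      abs_of_nonneg (mul_nonneg hc hnn)]
    exact mul_le_mul_of_nonneg_left hmono hc

lemma abs_sndDiff_max_zero_rpow_le {p h : ℝ} (hp0 : 0 ≤ p) (hp1 : p ≤ 1) (hh : 0 ≤ h)
    (x : ℝ) :
    |sndDiff (fun t => max t 0 ^ p) h x| ≤ h ^ p := by
  refine abs_sndDiff_le_of_monotone
    (fun _ _ hst => rpow_le_rpow (le_max_right _ _) (max_le_max hst le_rfl) hp0) hh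
    (fun t => ?_) x
  have : max t 0 ^ p ≤ max (t - h) 0 ^ p + h ^ p :=
    calc max t 0 ^ p ≤ (max (t - h) 0 + h) ^ p :=
          rpow_le_rpow (le_max_right _ _) (max_le (by linarith [le_max_left (t - h) 0])
            (by linarith [le_max_right (t - h) 0])) hp0
      _ ≤ max (t - h) 0 ^ p + h ^ p := rpow_add_le_add_rpow (le_max_right _ _) hh hp0 hp1
  linarith

lemma integral_le_of_eq_zero_outside {f : ℝ → ℝ} {a b p q M : ℝ} (hap : a ≤ p)
    (hpq : p ≤ q) (hqb : q ≤ b) (hf : ContinuousOn f (Icc a b))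
    (hzero : ∀ x ∉ Ioo p q, f x = 0) (hM : ∀ x ∈ Icc p q, f x ≤ M) :
    ∫ x in a..b, f x ≤ M * (q - p) := by
  have hint : ∀ u v, a ≤ u → u ≤ v → v ≤ b → IntervalIntegrable f volume u v :=
    fun u v hau huv hvb => (hf.mono (Icc_subset_Icc hau hvb)).intervalIntegrable_of_Icc huv
  have hvanish : ∀ u v, (∀ x ∈ uIcc u v, x ∉ Ioo p q) → ∫ x in u..v, f x = 0 := by
    intro u v huv
    rw [integral_congr (g := 0) fun x hx => hzero x (huv x hx)]
    simp
  have hmid : ∫ x in p..q, f x ≤ ∫ _ in p..q, M :=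
    integral_mono_on hpq (hint p q hap hpq hqb) intervalIntegrable_const hM
  rw [← integral_add_adjacent_intervals (hint a p le_rfl hap (hpq.trans hqb))
      (hint p b hap (hpq.trans hqb) le_rfl),
    ← integral_add_adjacent_intervals (hint p q hap hpq hqb)
      (hint q b (hap.trans hpq) hqb le_rfl),
    hvanish a p fun x hx h => by rw [uIcc_of_le hap] at hx; linarith [hx.2, h.1],
    hvanish q b fun x hx h => by rw [uIcc_of_le hqb] at hx; linarith [hx.1, h.2], zero_add,
    add_zero]
  rw [intervalIntegral.integral_const, smul_eq_mul] at hmid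
  linarith

lemma eventually_mul_rpow_lt_mul_rpow {p q A B : ℝ} (hpq : p < q) (hA : 0 < A) :
    ∀ᶠ h in 𝓝[>] 0, B * h ^ q < A * h ^ p := by
  have hlim : Tendsto (fun h : ℝ => B * h ^ (q - p)) (𝓝[>] 0) (𝓝 0) := by
    have := (continuousAt_rpow_const 0 (q - p) (Or.inr (by linarith))).tendsto.const_mul B
    rw [zero_rpow (by linarith), mul_zero] at this
    exact this.mono_left nhdsWithin_le_nhds
  filter_upwards [hlim.eventually (gt_mem_nhds hA), self_mem_nhdsWithin] with h hlt hh
  calc B * h ^ q = B * h ^ (q - p) * h ^ p := by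
        rw [mul_assoc, ← rpow_add hh, sub_add_cancel]
    _ < A * h ^ p := mul_lt_mul_of_pos_right hlt (rpow_pos_of_pos hh p)

lemma exists_forall_Icc_lt_of_continuousWithinAt {f : ℝ → ℝ} {a b c y : ℝ}
    (hf : ContinuousWithinAt f (Icc a b) c) (hac : a ≤ c) (hcb : c < b) (hy : f c < y) :
    ∃ δ > 0, c + δ ≤ b ∧ ∀ x ∈ Icc c (c + δ), f x < y := by
  have hright : ∀ᶠ x in 𝓝[≥] c, x ≤ b ∧ f x < y := by
    have hcont : ContinuousWithinAt f (Ici c) c := hf.mono_of_mem_nhdsWithin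
      (mem_of_superset (Icc_mem_nhdsGE hcb) (Icc_subset_Icc hac le_rfl))
    filter_upwards [Icc_mem_nhdsGE hcb, hcont.eventually (gt_mem_nhds hy)] with x hx hfx
    exact ⟨hx.2, hfx⟩
  obtain ⟨u, hcu : c < u, hsub⟩ := mem_nhdsGE_iff_exists_Ico_subset.1 hright
  have hsub' : Icc c (c + (u - c) / 2) ⊆ Ico c u := Icc_subset_Ico_right (by linarith)
  exact ⟨(u - c) / 2, by linarith, (hsub (hsub' ⟨by linarith, le_rfl⟩)).1,
    fun x hx => (hsub (hsub' hx)).2⟩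

noncomputable def tent (c h x : ℝ) : ℝ := sndDiff (fun t => max t 0) h (x - c)

lemma continuous_tent (c h : ℝ) : Continuous (tent c h) := by
  unfold tent sndDiff
  fun_prop

noncomputable def secondVariation (a b α : ℝ) (P Q R η : ℝ → ℝ) : ℝ :=
  ∫ x in a..b, (P x * leftRLderiv a α η x ^ 2 + Q x * η x * leftRLderiv a α η x
    + R x * η x ^ 2)

section Tent

variable {α a b c h : ℝ}

lemma tent_eq_zero_of_le {x : ℝ} (hh : 0 ≤ h) (hx : x ≤ c) : tent c h x = 0 := by
  rw [tent, sndDiff_eq_self (fun t ht => max_eq_right ht) hh (by linarith),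
    max_eq_right (by linarith)]

lemma tent_eq_zero_of_ge {x : ℝ} (hh : 0 ≤ h) (hx : c + 2 * h ≤ x) : tent c h x = 0 := by
  rw [tent, sndDiff, max_eq_left (by linarith), max_eq_left (by linarith),
    max_eq_left (by linarith)]
  ring

lemma abs_tent_le (hh : 0 ≤ h) (x : ℝ) : |tent c h x| ≤ h := by
  simpa [tent, rpow_one] using abs_sndDiff_max_zero_rpow_le zero_le_one le_rfl hh (x - c)

lemma leftRLint_tent (hα1 : α < 1) (hac : a ≤ c) (hh : 0 ≤ h) :
    leftRLint a α (tent c h)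
      = fun x => sndDiff (fun t => max t 0 ^ (2 - α)) h (x - c) / Gamma (3 - α) := by
  ext x
  have hint : ∀ d : ℝ,
      IntervalIntegrable (fun u => max (u - d) 0 * (x - u) ^ (-α)) volume a x := fun d =>
    (intervalIntegrable_sub_rpow (by linarith) x a x).continuousOn_mul (by fun_prop)
  have hsplit : (fun u => tent c h u * (x - u) ^ (-α)) = fun u =>
      max (u - c) 0 * (x - u) ^ (-α) - 2 * (max (u - (c + h)) 0 * (x - u) ^ (-α))
        + max (u - (c + 2 * h)) 0 * (x - u) ^ (-α) := by
    ext u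
    simp only [tent, sndDiff, sub_sub]
    ring
  rw [leftRLint, hsplit, integral_add ((hint c).sub ((hint _).const_mul 2)) (hint _),
    integral_sub (hint c) ((hint _).const_mul 2), intervalIntegral.integral_const_mul,
    integral_max_sub_mul_sub_rpow hα1 hac, integral_max_sub_mul_sub_rpow hα1 (by linarith),
    integral_max_sub_mul_sub_rpow hα1 (by linarith), Gamma_three_sub hα1, Gamma_two_sub hα1]
  simp only [sndDiff, sub_sub]
  field_simp

lemma hasDerivAt_leftRLint_tent (hα1 : α < 1) (hac : a ≤ c) (hh : 0 ≤ h) (x : ℝ) :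
    HasDerivAt (leftRLint a α (tent c h))
      (sndDiff (fun t => max t 0 ^ (1 - α)) h (x - c) / Gamma (2 - α)) x := by
  have hd := (hasDerivAt_sndDiff_sub (fun t => hasDerivAt_max_zero_rpow
    (show 1 < 2 - α by linarith) t) h c x).div_const (Gamma (3 - α))
  rw [leftRLint_tent hα1 hac hh]
  refine hd.congr_deriv ?_
  have h2 : 2 - α ≠ 0 := by linarith
  rw [Gamma_three_sub hα1, show (2 : ℝ) - α - 1 = 1 - α by ring]
  simp only [sndDiff]
  field_simp

lemma leftRLderiv_tent (hα1 : α < 1) (hac : a ≤ c) (hh : 0 ≤ h) (x : ℝ) :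
    leftRLderiv a α (tent c h) x
      = sndDiff (fun t => max t 0 ^ (1 - α)) h (x - c) / Gamma (2 - α) :=
  (hasDerivAt_leftRLint_tent hα1 hac hh x).deriv

lemma leftRLderiv_tent_of_le {x : ℝ} (hα1 : α < 1) (hac : a ≤ c) (hh : 0 ≤ h)
    (hx : x ≤ c + h) :
    leftRLderiv a α (tent c h) x = max (x - c) 0 ^ (1 - α) / Gamma (2 - α) := by
  rw [leftRLderiv_tent hα1 hac hh,
    sndDiff_eq_self (fun t => max_zero_rpow_of_nonpos (by linarith)) hh (by linarith)]

lemma continuous_leftRLderiv_tent (hα1 : α < 1) (hac : a ≤ c) (hh : 0 ≤ h) :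
    Continuous (leftRLderiv a α (tent c h)) := by
  rw [funext (leftRLderiv_tent hα1 hac hh)]
  simp only [sndDiff]
  fun_prop (disch := linarith)

lemma abs_leftRLderiv_tent_le (hα0 : 0 < α) (hα1 : α < 1) (hac : a ≤ c)
    (hh : 0 ≤ h) (x : ℝ) :
    |leftRLderiv a α (tent c h) x| ≤ h ^ (1 - α) / Gamma (2 - α) := by
  rw [leftRLderiv_tent hα1 hac hh, abs_div, abs_of_pos (Gamma_pos_of_pos (by linarith))]
  exact div_le_div_of_nonneg_right
    (abs_sndDiff_max_zero_rpow_le (by linarith) (by linarith) hh _)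
    (Gamma_pos_of_pos (by linarith)).le

lemma abs_leftRLderiv_tent_le_of_le {δ x : ℝ} (hα0 : 0 < α) (hα1 : α < 1) (hac : a ≤ c)
    (hh : 0 ≤ h) (hδ : 0 < δ) (hx : c + 2 * h + δ ≤ x) :
    |leftRLderiv a α (tent c h) x|
      ≤ α * (1 - α) * δ ^ (-α - 1) / Gamma (2 - α) * h ^ 2 := by
  have hG := Gamma_pos_of_pos (show 0 < 2 - α by linarith)
  rw [leftRLderiv_tent hα1 hac hh, abs_div, abs_of_pos hG, div_mul_eq_mul_div]
  exact div_le_div_of_nonneg_right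
    (abs_sndDiff_max_zero_rpow_le_of_le hα0 hα1 hδ hh (by linarith)) hG.le

lemma integral_leftRLderiv_tent_sq (hα1 : α < 1) (hac : a ≤ c) (hh : 0 ≤ h) :
    ∫ x in c..c + h, leftRLderiv a α (tent c h) x ^ 2
      = h ^ (3 - 2 * α) / ((3 - 2 * α) * Gamma (2 - α) ^ 2) := by
  have hsq : EqOn (fun x => leftRLderiv a α (tent c h) x ^ 2)
      (fun x => (x - c) ^ ((1 - α) * (2 : ℕ)) / Gamma (2 - α) ^ 2) (uIcc c (c + h)) := by
    intro x hx
    rw [uIcc_of_le (by linarith)] at hx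
    simp only
    rw [leftRLderiv_tent_of_le hα1 hac hh hx.2, max_eq_left (by linarith [hx.1]), div_pow,
      rpow_mul_natCast (by linarith [hx.1])]
  rw [integral_congr hsq, intervalIntegral.integral_div,
    integral_comp_sub_right (fun x => x ^ ((1 - α) * (2 : ℕ))), sub_self, add_sub_cancel_left,
    integral_rpow (Or.inl (by push_cast; linarith)), zero_rpow (by push_cast; linarith)]
  push_cast
  rw [show (1 - α) * 2 + 1 = 3 - 2 * α by ring, sub_zero]
  field_simp

lemma integral_mul_tent_mul_leftRLderiv_le {Q : ℝ → ℝ} {CQ : ℝ} (hα0 : 0 < α)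
    (hα1 : α < 1)
    (hQ : ContinuousOn Q (Icc a b)) (hCQ : ∀ x ∈ Icc a b, |Q x| ≤ CQ) (hac : a ≤ c)
    (hh : 0 < h) (hcb : c + 2 * h ≤ b) :
    ∫ x in a..b, Q x * tent c h x * leftRLderiv a α (tent c h) x
      ≤ 2 * CQ / Gamma (2 - α) * h ^ (3 - α) := by
  have hbound : ∀ x ∈ Icc c (c + 2 * h), Q x * tent c h x * leftRLderiv a α (tent c h) x
      ≤ CQ * h * (h ^ (1 - α) / Gamma (2 - α)) := fun x hx => by
    have hxab : x ∈ Icc a b := ⟨by linarith [hx.1], by linarith [hx.2]⟩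
    have hCQ0 : 0 ≤ CQ := (abs_nonneg _).trans (hCQ x hxab)
    calc Q x * tent c h x * leftRLderiv a α (tent c h) x
        ≤ |Q x| * |tent c h x| * |leftRLderiv a α (tent c h) x| := by
          rw [← abs_mul, ← abs_mul]; exact le_abs_self _
      _ ≤ CQ * h * (h ^ (1 - α) / Gamma (2 - α)) := by
          gcongr
          · exact hCQ x hxab
          · exact abs_tent_le hh.le x
          · exact abs_leftRLderiv_tent_le hα0 hα1 hac hh.le x
  refine (integral_le_of_eq_zero_outside
    (f := fun x => Q x * tent c h x * leftRLderiv a α (tent c h) x) hac (by linarith) hcb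
    ((hQ.mul (continuous_tent c h).continuousOn).mul
      (continuous_leftRLderiv_tent hα1 hac hh.le).continuousOn)
    (fun x hx => ?_) hbound).trans_eq ?_
  · rcases le_or_gt x c with hxc | hxc
    · rw [tent_eq_zero_of_le hh.le hxc, mul_zero, zero_mul]
    · rw [tent_eq_zero_of_ge hh.le (by by_contra! h; exact hx ⟨hxc, h⟩), mul_zero, zero_mul]
  · rw [show 3 - α = 1 - α + (2 : ℕ) by push_cast; ring, rpow_add_natCast hh.ne']
    ring

lemma integral_mul_tent_sq_le {R : ℝ → ℝ} {CR : ℝ} (hR : ContinuousOn R (Icc a b))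
    (hCR : ∀ x ∈ Icc a b, |R x| ≤ CR) (hac : a ≤ c) (hh : 0 ≤ h) (hcb : c + 2 * h ≤ b) :
    ∫ x in a..b, R x * tent c h x ^ 2 ≤ 2 * CR * h ^ 3 := by
  have hbound : ∀ x ∈ Icc c (c + 2 * h), R x * tent c h x ^ 2 ≤ CR * h ^ 2 := fun x hx => by
    have hxab : x ∈ Icc a b := ⟨by linarith [hx.1], by linarith [hx.2]⟩
    have hCR0 : 0 ≤ CR := (abs_nonneg _).trans (hCR x hxab)
    calc R x * tent c h x ^ 2 ≤ |R x| * |tent c h x| ^ 2 := by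
          rw [← abs_pow, ← abs_mul]; exact le_abs_self _
      _ ≤ CR * h ^ 2 := by gcongr; exacts [hCR x hxab, abs_tent_le hh x]
  refine (integral_le_of_eq_zero_outside (f := fun x => R x * tent c h x ^ 2) hac (by linarith)
    hcb (hR.mul ((continuous_tent c h).pow 2).continuousOn) (fun x hx => ?_) hbound).trans_eq
    (by ring)
  rcases le_or_gt x c with hxc | hxc
  · rw [tent_eq_zero_of_le hh hxc]; ring
  · rw [tent_eq_zero_of_ge hh (by by_contra! h; exact hx ⟨hxc, h⟩)]; ring

lemma integral_mul_leftRLderiv_tent_sq_head_le {P : ℝ → ℝ} {m : ℝ} (hα1 : α < 1)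
    (hP : ContinuousOn P (Icc a b)) (hPm : ∀ x ∈ Icc c (c + h), P x ≤ -m) (hac : a ≤ c)
    (hh : 0 ≤ h) (hcb : c + h ≤ b) :
    ∫ x in a..c + h, P x * leftRLderiv a α (tent c h) x ^ 2
      ≤ -(m / ((3 - 2 * α) * Gamma (2 - α) ^ 2)) * h ^ (3 - 2 * α) := by
  set D := leftRLderiv a α (tent c h) with hD
  have hDc := continuous_leftRLderiv_tent hα1 hac hh
  have hint : ∀ u v, a ≤ u → u ≤ v → v ≤ c + h →
      IntervalIntegrable (fun x => P x * D x ^ 2) volume u v := fun u v hau huv hvb =>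
    ((hP.mono (Icc_subset_Icc hau (hvb.trans hcb))).mul
      (hDc.pow 2).continuousOn).intervalIntegrable_of_Icc huv
  have hleft : ∫ x in a..c, P x * D x ^ 2 = 0 := by
    rw [integral_congr (g := 0) fun x hx => ?_]
    · simp
    rw [uIcc_of_le hac] at hx
    rw [Pi.zero_apply, hD, leftRLderiv_tent_of_le (x := x) hα1 hac hh (by linarith [hx.2]),
      max_zero_rpow_of_nonpos (by linarith) (by linarith [hx.2])]
    ring
  have hmid : ∫ x in c..c + h, P x * D x ^ 2 ≤ ∫ x in c..c + h, -m * D x ^ 2 :=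
    integral_mono_on (by linarith) (hint _ _ hac (by linarith) le_rfl)
      (((hDc.pow 2).const_mul _).intervalIntegrable _ _)
      fun x hx => mul_le_mul_of_nonneg_right (hPm x hx) (sq_nonneg _)
  rw [intervalIntegral.integral_const_mul, integral_leftRLderiv_tent_sq hα1 hac hh] at hmid
  rw [← integral_add_adjacent_intervals (hint a c le_rfl hac (by linarith))
    (hint c (c + h) hac (by linarith) le_rfl), hleft, zero_add]
  exact hmid.trans_eq (by ring)

lemma integral_mul_leftRLderiv_tent_sq_tail_le {P : ℝ → ℝ} {CP δ : ℝ} (hα0 : 0 < α)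
    (hα1 : α < 1) (hP : ContinuousOn P (Icc a b)) (hCP : ∀ x ∈ Icc a b, |P x| ≤ CP)
    (hP0 : ∀ x ∈ Icc c (c + δ), P x ≤ 0) (hac : a ≤ c) (hcδ : c + δ ≤ b) (hh : 0 < h)
    (hhδ : 4 * h ≤ δ) :
    ∫ x in c + h..b, P x * leftRLderiv a α (tent c h) x ^ 2
      ≤ (b - a) * CP * (α * (1 - α) * (δ / 2) ^ (-α - 1) / Gamma (2 - α)) ^ 2 * h ^ 4 := by
  set D := leftRLderiv a α (tent c h)
  set K := α * (1 - α) * (δ / 2) ^ (-α - 1) / Gamma (2 - α)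
  have hCP0 : 0 ≤ CP := (abs_nonneg _).trans (hCP a ⟨le_rfl, by linarith⟩)
  have hbound : ∀ x ∈ Icc (c + h) b, P x * D x ^ 2 ≤ CP * (K * h ^ 2) ^ 2 := by
    intro x hx
    rcases le_or_gt x (c + δ) with hxδ | hxδ
    · exact (mul_nonpos_of_nonpos_of_nonneg (hP0 x ⟨by linarith [hx.1], hxδ⟩)
        (sq_nonneg (D x))).trans (mul_nonneg hCP0 (sq_nonneg _))
    · have hD := abs_leftRLderiv_tent_le_of_le hα0 hα1 hac hh.le (by linarith)
        (show c + 2 * h + δ / 2 ≤ x by linarith)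
      calc P x * D x ^ 2 ≤ |P x| * |D x| ^ 2 := by
            rw [← abs_pow, ← abs_mul]; exact le_abs_self _
        _ ≤ CP * (K * h ^ 2) ^ 2 := by
            gcongr
            exact hCP x ⟨by linarith [hx.1], hx.2⟩
  have hint : IntervalIntegrable (fun x => P x * D x ^ 2) volume (c + h) b :=
    ((hP.mono (Icc_subset_Icc (by linarith) le_rfl)).mul
      ((continuous_leftRLderiv_tent hα1 hac hh.le).pow 2).continuousOn).intervalIntegrable_of_Icc
      (show c + h ≤ b by linarith)
  have := integral_mono_on (by linarith) hint intervalIntegrable_const hbound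
  rw [intervalIntegral.integral_const, smul_eq_mul] at this
  calc _ ≤ (b - (c + h)) * (CP * (K * h ^ 2) ^ 2) := this
    _ ≤ (b - a) * (CP * (K * h ^ 2) ^ 2) := by gcongr; linarith
    _ = (b - a) * CP * K ^ 2 * h ^ 4 := by ring

lemma secondVariation_tent_le {P Q R : ℝ → ℝ} {CP CQ CR m δ : ℝ} (hα0 : 0 < α)
    (hα1 : α < 1) (hP : ContinuousOn P (Icc a b)) (hQ : ContinuousOn Q (Icc a b))
    (hR : ContinuousOn R (Icc a b)) (hCP : ∀ x ∈ Icc a b, |P x| ≤ CP)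
    (hCQ : ∀ x ∈ Icc a b, |Q x| ≤ CQ) (hCR : ∀ x ∈ Icc a b, |R x| ≤ CR) (hm : 0 ≤ m)
    (hPm : ∀ x ∈ Icc c (c + δ), P x ≤ -m) (hac : a ≤ c) (hcδ : c + δ ≤ b) (hh : 0 < h)
    (hhδ : 4 * h ≤ δ) :
    secondVariation a b α P Q R (tent c h)
      ≤ -(m / ((3 - 2 * α) * Gamma (2 - α) ^ 2)) * h ^ (3 - 2 * α)
        + 2 * CQ / Gamma (2 - α) * h ^ (3 - α) + 2 * CR * h ^ 3
        + (b - a) * CP * (α * (1 - α) * (δ / 2) ^ (-α - 1) / Gamma (2 - α)) ^ 2 * h ^ 4 := by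
  set D := leftRLderiv a α (tent c h)
  have hDc : ContinuousOn D (Icc a b) := (continuous_leftRLderiv_tent hα1 hac hh.le).continuousOn
  have hηc : ContinuousOn (tent c h) (Icc a b) := (continuous_tent c h).continuousOn
  have iP : ∀ u v, a ≤ u → u ≤ v → v ≤ b →
      IntervalIntegrable (fun x => P x * D x ^ 2) volume u v := fun u v hau huv hvb =>
    ((hP.mul (hDc.pow 2)).mono (Icc_subset_Icc hau hvb)).intervalIntegrable_of_Icc huv
  have iQ : IntervalIntegrable (fun x => Q x * tent c h x * D x) volume a b :=
    ((hQ.mul hηc).mul hDc).intervalIntegrable_of_Icc (by linarith)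
  have iR : IntervalIntegrable (fun x => R x * tent c h x ^ 2) volume a b :=
    (hR.mul (hηc.pow 2)).intervalIntegrable_of_Icc (by linarith)
  have iP₀ := iP a b le_rfl (by linarith) le_rfl
  rw [secondVariation, integral_add (iP₀.add iQ) iR, integral_add iP₀ iQ,
    ← integral_add_adjacent_intervals (iP a (c + h) le_rfl (by linarith) (by linarith))
      (iP (c + h) b (by linarith) (by linarith) le_rfl)]
  have := integral_mul_leftRLderiv_tent_sq_head_le hα1 hP
    (fun x hx => hPm x ⟨hx.1, by linarith [hx.2]⟩) hac hh.le (by linarith)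
  have := integral_mul_leftRLderiv_tent_sq_tail_le hα0 hα1 hP hCP
    (fun x hx => (hPm x hx).trans (by linarith)) hac hcδ hh hhδ
  have := integral_mul_tent_mul_leftRLderiv_le hα0 hα1 hQ hCQ hac hh (by linarith)
  have := integral_mul_tent_sq_le hR hCR hac hh.le (by linarith)
  linarith

end Tent

lemma exists_secondVariation_tent_neg {α a b c δ m : ℝ} {P Q R : ℝ → ℝ} (hα0 : 0 < α)
    (hα1 : α < 1) (hP : ContinuousOn P (Icc a b)) (hQ : ContinuousOn Q (Icc a b))
    (hR : ContinuousOn R (Icc a b)) (hac : a ≤ c) (hδ : 0 < δ) (hcδ : c + δ ≤ b)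
    (hm : 0 < m) (hPm : ∀ x ∈ Icc c (c + δ), P x ≤ -m) :
    ∃ h > 0, c + 2 * h ≤ b ∧ secondVariation a b α P Q R (tent c h) < 0 := by
  obtain ⟨CP, hCP⟩ := isCompact_Icc.exists_bound_of_continuousOn hP
  obtain ⟨CQ, hCQ⟩ := isCompact_Icc.exists_bound_of_continuousOn hQ
  obtain ⟨CR, hCR⟩ := isCompact_Icc.exists_bound_of_continuousOn hR
  set G := Gamma (2 - α)
  set A := m / ((3 - 2 * α) * G ^ 2)
  have hA : 0 < A / 3 :=
    div_pos (div_pos hm (mul_pos (by linarith) (pow_pos (Gamma_pos_of_pos (by linarith)) 2)))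
      three_pos
  have hQsmall : ∀ᶠ h in 𝓝[>] 0, 2 * CQ / G * h ^ (3 - α) < A / 3 * h ^ (3 - 2 * α) :=
    eventually_mul_rpow_lt_mul_rpow (by linarith) hA
  have hRsmall : ∀ᶠ h in 𝓝[>] (0 : ℝ), 2 * CR * h ^ 3 < A / 3 * h ^ (3 - 2 * α) := by
    simpa using
      eventually_mul_rpow_lt_mul_rpow (B := 2 * CR) (q := (3 : ℕ)) (by simp; linarith) hA
  have hPsmall : ∀ᶠ h in 𝓝[>] (0 : ℝ),
      (b - a) * CP * (α * (1 - α) * (δ / 2) ^ (-α - 1) / G) ^ 2 * h ^ 4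
        < A / 3 * h ^ (3 - 2 * α) := by
    simpa using eventually_mul_rpow_lt_mul_rpow (q := (4 : ℕ)) (by simp; linarith) hA
  obtain ⟨h, hQh, hRh, hPh, hh, hhδ⟩ := (hQsmall.and (hRsmall.and (hPsmall.and
    (Ioo_mem_nhdsGT (show 0 < δ / 4 by linarith))))).exists
  refine ⟨h, hh, by linarith, (secondVariation_tent_le hα0 hα1 hP hQ hR hCP hCQ hCR hm.le hPm
    hac hcδ hh (by linarith)).trans_lt ?_⟩
  linarith

/-- The fundamental lemma used for the fractional Legendre condition: if the quadratic
functional `∫_a^b [P (D^α η)² + Q η D^α η + R η²] dx` is nonnegative for all admissible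
variations `η`, then `P ≥ 0` on `[a,b]`. -/
theorem fractional_legendre_lemma (a b α : ℝ) (hab : a < b) (hα0 : 0 < α) (hα1 : α < 1)
    (P Q R : ℝ → ℝ)
    (hP : ContinuousOn P (Set.Icc a b)) (hQ : ContinuousOn Q (Set.Icc a b))
    (hR : ContinuousOn R (Set.Icc a b))
    (hpos : ∀ η : ℝ → ℝ, ContinuousOn η (Set.Icc a b) → η a = 0 → η b = 0 →
      (∀ x ∈ Set.Ioc a b, DifferentiableAt ℝ (leftRLint a α η) x) →
      (∃ M : ℝ, ∀ x ∈ Set.Ioc a b, |leftRLderiv a α η x| ≤ M) →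
      0 ≤ ∫ x in a..b,
        (P x * leftRLderiv a α η x ^ 2 + Q x * η x * leftRLderiv a α η x
          + R x * η x ^ 2)) :
    ∀ x ∈ Set.Icc a b, 0 ≤ P x := by
  have hIco : ∀ c ∈ Ico a b, 0 ≤ P c := by
    rintro c ⟨hac, hcb⟩
    by_contra! hPc
    obtain ⟨δ, hδ, hcδ, hPδ⟩ :=
      exists_forall_Icc_lt_of_continuousWithinAt (hP c ⟨hac, hcb.le⟩) hac hcb
        (show P c < P c / 2 by linarith)
    obtain ⟨h, hh, hchb, hneg⟩ :=
      exists_secondVariation_tent_neg hα0 hα1 hP hQ hR hac hδ hcδ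
        (show 0 < -(P c / 2) by linarith) fun x hx => by linarith [hPδ x hx]
    exact hneg.not_ge (hpos _ (continuous_tent c h).continuousOn (tent_eq_zero_of_le hh.le hac)
      (tent_eq_zero_of_ge hh.le hchb)
      (fun x _ => (hasDerivAt_leftRLint_tent hα1 hac hh.le x).differentiableAt)
      ⟨_, fun x _ => abs_leftRLderiv_tent_le hα0 hα1 hac hh.le x⟩)
  intro x hx
  refine ContinuousWithinAt.closure_le (by rwa [closure_Ico hab.ne]) continuousWithinAt_const
    ((hP x hx).mono Ico_subset_Icc_self) hIco
end
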